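/- Let μ and ν be Borel probability measures on ℝ supported on [0,∞), z ∈ ℂ∖ℝ, and W_μ(z) = ∫ √x/(z−x) dμ(x). Set D = z·G_μ(z)·G_ν(z) − (z·G_μ(z)−1)·(z·G_ν(z)−1). Then D ≠ 0, and for all α ∈ ℂ, ψ₁ ∈ L²(μ) with ∫ψ₁ dμ = 0, ψ₂ ∈ L²(ν) with ∫ψ₂ dν = 0, defining c₁ = [(z·G_μ(z)−1)·∫ ψ₂(y)/(z−y) dν(y) + G_ν(z)·(α·W_μ(z) + ∫ √x·ψ₁(x)/(z−x) dμ(x))]/D, c₂ = [z·G_μ(z)·∫ ψ₂(y)/(z−y) dν(y) + (z·G_ν(z)−1)·(α·W_μ(z) + ∫ √x·ψ₁(x)/(z−x) dμ(x))]/D, β = α·G_μ(z) + ∫ ψ₁(x)/(z−x) dμ(x) + W_μ(z)·(c₂−c₁), c₃ = z·β − α, φ₁(x) = (ψ₁(x) + β·x + (c₂−c₁)·√x − c₃)/(z−x), and φ₂(y) = (ψ₂(y) + c₁·y − c₂)/(z−y), the following hold: φ₁ ∈ L²(μ), φ₂ ∈ L²(ν), ∫φ₁ dμ = 0 = ∫φ₂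 dν, the function x ↦ √x·(φ₁(x)+β) is μ-integrable with ∫ √x·(φ₁(x)+β) dμ(x) = c₁, and (z·Id − R_x ∘ Q_y ∘ R_x)(β,φ₁,φ₂) = (α,ψ₁,ψ₂), where R_x(a,χ₁,χ₂) = (∫ √x·(χ₁+a) dμ, √x·(χ₁+a) − ∫ √x·(χ₁+a) dμ, χ₂) and Q_y(a,χ₁,χ₂) = (∫ y·(χ₂+a) dν, χ₁, y·(χ₂+a) − ∫ y·(χ₂+a) dν), all occurring integrals being absolutely convergent and all intermediate functions lying in the respective L² spaces (which is part of the claim). (R_x is the square root of the model operator Q_x, so this exhibits the explicit bounded inverse of z − √Q_x Q_y √Q_x in the boolean model.) -/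

import Mathlib

open MeasureTheory

/-- The Cauchy transform `G_ρ(z) = ∫ 1/(z−t) dρ(t)` of a measure on `ℝ`. -/
noncomputable def cauchyTransform (ρ : Measure ℝ) (z : ℂ) : ℂ := ∫ t, (z - (t : ℂ))⁻¹ ∂ρ

/-- The transform `W_ρ(z) = ∫ √t/(z−t) dρ(t)` of a measure on `ℝ`. -/
noncomputable def sqrtCauchyTransform (ρ : Measure ℝ) (z : ℂ) : ℂ :=
  ∫ t, (Real.sqrt t : ℂ) / (z - (t : ℂ)) ∂ρ

/-- The operator `R_x = √Q_x` of the boolean model, acting on triples `(a, χ₁, χ₂)`: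
`R_x(a,χ₁,χ₂) = (∫ √x·(χ₁+a) dμ, √x·(χ₁+a) − ∫ √x·(χ₁+a) dμ, χ₂)`. -/
noncomputable def boolRx (μ : Measure ℝ) (t : ℂ × (ℝ → ℂ) × (ℝ → ℂ)) :
    ℂ × (ℝ → ℂ) × (ℝ → ℂ) :=
  (∫ x, (Real.sqrt x : ℂ) * (t.2.1 x + t.1) ∂μ,
   fun x => (Real.sqrt x : ℂ) * (t.2.1 x + t.1)
     - ∫ x', (Real.sqrt x' : ℂ) * (t.2.1 x' + t.1) ∂μ,
   t.2.2)

/-- The operator `Q_y` of the boolean model: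
`Q_y(a,χ₁,χ₂) = (∫ y·(χ₂+a) dν, χ₁, y·(χ₂+a) − ∫ y·(χ₂+a) dν)`. -/
noncomputable def boolQy (ν : Measure ℝ) (t : ℂ × (ℝ → ℂ) × (ℝ → ℂ)) :
    ℂ × (ℝ → ℂ) × (ℝ → ℂ) :=
  (∫ y, (y : ℂ) * (t.2.2 y + t.1) ∂ν,
   t.2.1,
   fun y => (y : ℂ) * (t.2.2 y + t.1) - ∫ y', (y' : ℂ) * (t.2.2 y' + t.1) ∂ν)

/-!
Every function in the statement is a resolvent `(ψ(t) + b√t + c)/(z − t)` with `ψ ∈ L²`: with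
`c₃ = zβ − α` one has `φ₁ + β = (ψ₁ + (c₂ − c₁)√x + α)/(z − x)` and
`φ₂ + c₁ = (ψ₂ + c₁z − c₂)/(z − y)`. As `1/(z − t)`, `t/(z − t)` and `√t/(z − t)` are bounded for
`z ∉ ℝ`, all these functions are in `L²`, their integrals are affine in `G`, `W` and `zG − 1`, and
the equations `(z − t)·(φ + const) = numerator` are the three coordinates of the resolvent
equation. The formula for `β` makes `∫ φ₁ dμ = 0`, and `(c₁, c₂)` is the Cramer solution of the
linear system `∫ φ₂ dν = 0`, `∫ √x (φ₁ + β) dμ = c₁`, whose determinant is `D`.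

For `D ≠ 0` write `w = z − 1/G`, so that `D = G_μ G_ν (z − w_μ w_ν)`. The Cauchy–Schwarz bound
`|G|² ≤ ∫ |z − t|⁻²` gives `Im z · Im w ≤ 0`, and support in `[0, ∞)` gives `Im z · Im (w z̄) ≤ 0`;
these sign conditions rule out `z = w_μ w_ν` unless `z` is real.
-/

open ComplexConjugate
open scoped ENNReal

lemma abs_im_le_norm_sub_ofReal (z : ℂ) (t : ℝ) : |z.im| ≤ ‖z - t‖ := by
  simpa using Complex.abs_im_le_norm (z - t)

lemma im_inv_sub_ofReal (z : ℂ) (t : ℝ) : ((z - t)⁻¹).im = -z.im * ‖(z - t)⁻¹‖ ^ 2 := by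
  rw [Complex.inv_im, norm_inv, inv_pow, Complex.sq_norm]
  simp [div_eq_mul_inv]

lemma im_mul_inv_sub_ofReal (z : ℂ) (t : ℝ) :
    (z * (z - t)⁻¹).im = -z.im * (t * ‖(z - t)⁻¹‖ ^ 2) := by
  rw [norm_inv, inv_pow, Complex.sq_norm, Complex.mul_im, Complex.inv_im, Complex.inv_re]
  simp only [Complex.sub_re, Complex.sub_im, Complex.ofReal_re, Complex.ofReal_im]
  ring

lemma ae_nonneg_of_measure_Iio_eq_zero {ρ : Measure ℝ} (h : ρ (Set.Iio 0) = 0) :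
    ∀ᵐ t ∂ρ, 0 ≤ t :=
  ae_iff.2 (measure_mono_null (fun _ ht => not_le.1 ht) h)

lemma integral_const_mul_sub_sub_const {α : Type*} [MeasurableSpace α] {ρ : Measure α}
    [IsProbabilityMeasure ρ] {f g : α → ℂ} (hf : Integrable f ρ) (hg : Integrable g ρ) (a c : ℂ) :
    ∫ t, a * f t - g t - c ∂ρ = a * ∫ t, f t ∂ρ - ∫ t, g t ∂ρ - c := by
  have hfg : Integrable (fun t => a * f t - g t) ρ := (hf.const_mul a).sub hg
  rw [integral_sub hfg (integrable_const c), integral_sub (hf.const_mul a) hg, integral_const_mul]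
  simp

lemma integral_sub_const_eq_zero {α : Type*} [MeasurableSpace α] {ρ : Measure α}
    [IsProbabilityMeasure ρ] {f : α → ℂ} (hf : Integrable f ρ) {a : ℂ}
    (h : ∫ t, f t ∂ρ = a) : ∫ t, f t - a ∂ρ = 0 := by
  rw [integral_sub hf (integrable_const a), h]
  simp

section ResolventBounds

variable {z : ℂ} (hz : z.im ≠ 0)
include hz

lemma sub_ofReal_ne_zero (t : ℝ) : z - t ≠ 0 := fun h =>
  hz (by simpa using congrArg Complex.im h)

lemma ofReal_div_sub_ofReal (t : ℝ) : (t : ℂ) / (z - t) = z * (z - t)⁻¹ - 1 := by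
  field_simp [sub_ofReal_ne_zero hz t]
  ring

lemma ofReal_mul_div_sub_ofReal (t : ℝ) (n : ℂ) :
    t * (n / (z - t)) = z * (n / (z - t)) - n := by
  field_simp [sub_ofReal_ne_zero hz t]
  ring

lemma norm_inv_sub_ofReal_le (t : ℝ) : ‖(z - t)⁻¹‖ ≤ |z.im|⁻¹ := by
  rw [norm_inv]
  exact inv_anti₀ (abs_pos.2 hz) (abs_im_le_norm_sub_ofReal z t)

lemma norm_ofReal_div_sub_ofReal_le (t : ℝ) : ‖(t : ℂ) / (z - t)‖ ≤ ‖z‖ * |z.im|⁻¹ + 1 :=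
  calc ‖(t : ℂ) / (z - t)‖ ≤ ‖z * (z - t)⁻¹‖ + ‖(1 : ℂ)‖ := by
        rw [ofReal_div_sub_ofReal hz]
        exact norm_sub_le _ _
    _ ≤ ‖z‖ * |z.im|⁻¹ + 1 := by
        rw [norm_mul, norm_one]
        gcongr
        exact norm_inv_sub_ofReal_le hz t

lemma norm_sqrt_div_sub_ofReal_le (t : ℝ) :
    ‖(√t : ℂ) / (z - t)‖ ≤ |z.im|⁻¹ + (‖z‖ * |z.im|⁻¹ + 1) := by
  have hsqrt : √t ≤ 1 + |t| :=
    Real.sqrt_le_iff.2 ⟨by positivity, by nlinarith [le_abs_self t, abs_nonneg t]⟩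
  calc ‖(√t : ℂ) / (z - t)‖ = √t * ‖(z - t)⁻¹‖ := by
        rw [div_eq_mul_inv, norm_mul, Complex.norm_real, Real.norm_of_nonneg (Real.sqrt_nonneg t)]
    _ ≤ (1 + |t|) * ‖(z - t)⁻¹‖ := by gcongr
    _ = ‖(z - t)⁻¹‖ + ‖(t : ℂ) / (z - t)‖ := by
        rw [div_eq_mul_inv (t : ℂ), norm_mul, Complex.norm_real, Real.norm_eq_abs]
        ring
    _ ≤ _ := add_le_add (norm_inv_sub_ofReal_le hz t) (norm_ofReal_div_sub_ofReal_le hz t)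

variable (ρ : Measure ℝ)

lemma memLp_top_inv_sub_ofReal : MemLp (fun t : ℝ => (z - t)⁻¹) ∞ ρ :=
  memLp_top_of_bound (Measurable.aestronglyMeasurable (by fun_prop)) _
    (.of_forall (norm_inv_sub_ofReal_le hz))

lemma memLp_top_ofReal_div_sub_ofReal : MemLp (fun t : ℝ => (t : ℂ) / (z - t)) ∞ ρ :=
  memLp_top_of_bound (Measurable.aestronglyMeasurable (by fun_prop)) _
    (.of_forall (norm_ofReal_div_sub_ofReal_le hz))

lemma memLp_top_sqrt_div_sub_ofReal : MemLp (fun t : ℝ => (√t : ℂ) / (z - t)) ∞ ρ :=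
  memLp_top_of_bound (Measurable.aestronglyMeasurable (by fun_prop)) _
    (.of_forall (norm_sqrt_div_sub_ofReal_le hz))

end ResolventBounds

section Multipliers

variable {ρ : Measure ℝ} {p : ℝ≥0∞} {z : ℂ} {ψ : ℝ → ℂ}

lemma MeasureTheory.MemLp.div_sub_ofReal (hψ : MemLp ψ p ρ) (hz : z.im ≠ 0) :
    MemLp (fun t : ℝ => ψ t / (z - t)) p ρ := by
  simpa only [div_eq_inv_mul] using hψ.mul' (memLp_top_inv_sub_ofReal hz ρ)

lemma MeasureTheory.MemLp.sqrt_mul_div_sub_ofReal (hψ : MemLp ψ p ρ) (hz : z.im ≠ 0) :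
    MemLp (fun t : ℝ => (√t : ℂ) * ψ t / (z - t)) p ρ := by
  simpa only [mul_div_right_comm] using hψ.mul' (memLp_top_sqrt_div_sub_ofReal hz ρ)

end Multipliers

section CauchyTransform

variable {ρ : Measure ℝ} {z : ℂ}

lemma integral_norm_inv_sub_ofReal_sq_pos [IsFiniteMeasure ρ] [NeZero ρ] (hz : z.im ≠ 0) :
    0 < ∫ t, ‖(z - t)⁻¹‖ ^ 2 ∂ρ := by
  refine (integral_pos_iff_support_of_nonneg (fun t => by positivity)
    ((memLp_top_inv_sub_ofReal hz ρ).mono_exponent le_top).integrable_norm_pow').2 ?_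
  have hsupp : Function.support (fun t : ℝ => ‖(z - t)⁻¹‖ ^ 2) = Set.univ :=
    Set.eq_univ_of_forall fun t => by simp [sub_ofReal_ne_zero hz t]
  rw [hsupp]
  simpa using NeZero.ne ρ

lemma im_cauchyTransform [IsFiniteMeasure ρ] (hz : z.im ≠ 0) :
    (cauchyTransform ρ z).im = -z.im * ∫ t, ‖(z - t)⁻¹‖ ^ 2 ∂ρ := by
  rw [cauchyTransform, ← integral_const_mul]
  simp_rw [← im_inv_sub_ofReal]
  exact (integral_im ((memLp_top_inv_sub_ofReal hz ρ).integrable le_top)).symm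

lemma im_mul_cauchyTransform [IsFiniteMeasure ρ] (hz : z.im ≠ 0) :
    (z * cauchyTransform ρ z).im = -z.im * ∫ t, t * ‖(z - t)⁻¹‖ ^ 2 ∂ρ := by
  rw [cauchyTransform, ← integral_const_mul, ← integral_const_mul]
  simp_rw [← im_mul_inv_sub_ofReal]
  exact (integral_im (((memLp_top_inv_sub_ofReal hz ρ).integrable le_top).const_mul z)).symm

lemma integral_ofReal_div_sub_ofReal [IsProbabilityMeasure ρ] (hz : z.im ≠ 0) :
    ∫ t, (t : ℂ) / (z - t) ∂ρ = z * cauchyTransform ρ z - 1 := by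
  simp_rw [ofReal_div_sub_ofReal hz]
  rw [integral_sub (((memLp_top_inv_sub_ofReal hz ρ).integrable le_top).const_mul z)
    (integrable_const 1), integral_const_mul, cauchyTransform]
  simp

lemma cauchyTransform_ne_zero [IsProbabilityMeasure ρ] (hz : z.im ≠ 0) :
    cauchyTransform ρ z ≠ 0 := fun h => by
  have := im_cauchyTransform (ρ := ρ) hz
  rw [h, Complex.zero_im, zero_eq_mul, neg_eq_zero] at this
  exact this.elim hz (integral_norm_inv_sub_ofReal_sq_pos hz).ne'

lemma norm_cauchyTransform_sq_le [IsProbabilityMeasure ρ] (hz : z.im ≠ 0) :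
    ‖cauchyTransform ρ z‖ ^ 2 ≤ ∫ t, ‖(z - t)⁻¹‖ ^ 2 ∂ρ := by
  have hL2 : MemLp (fun t : ℝ => ‖(z - t)⁻¹‖) 2 ρ :=
    ((memLp_top_inv_sub_ofReal hz ρ).mono_exponent le_top).norm
  have hvar := ProbabilityTheory.variance_nonneg (fun t : ℝ => ‖(z - t)⁻¹‖) ρ
  rw [ProbabilityTheory.variance_eq_sub hL2, sub_nonneg] at hvar
  calc ‖cauchyTransform ρ z‖ ^ 2 ≤ (∫ t, ‖(z - t)⁻¹‖ ∂ρ) ^ 2 := by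
        gcongr
        exact norm_integral_le_integral_norm _
    _ ≤ ∫ t, ‖(z - t)⁻¹‖ ^ 2 ∂ρ := hvar

lemma im_mul_im_sub_inv_cauchyTransform_nonpos [IsProbabilityMeasure ρ] (hz : z.im ≠ 0) :
    z.im * (z - (cauchyTransform ρ z)⁻¹).im ≤ 0 := by
  set G := cauchyTransform ρ z
  set J := ∫ t, ‖(z - t)⁻¹‖ ^ 2 ∂ρ
  have hG : 0 < ‖G‖ := norm_pos_iff.2 (cauchyTransform_ne_zero hz)
  have hGJ : ‖G‖ ^ 2 ≤ J := norm_cauchyTransform_sq_le hz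
  have hImG : G.im = -z.im * J := im_cauchyTransform hz
  have key : z.im * (z - G⁻¹).im = z.im ^ 2 * (‖G‖ ^ 2 - J) / ‖G‖ ^ 2 := by
    rw [Complex.sub_im, Complex.inv_im, hImG, Complex.normSq_eq_norm_sq]
    field_simp
  rw [key]
  exact div_nonpos_of_nonpos_of_nonneg
    (mul_nonpos_of_nonneg_of_nonpos (sq_nonneg _) (sub_nonpos.2 hGJ)) (sq_nonneg _)

lemma im_mul_im_sub_inv_cauchyTransform_mul_conj_nonpos [IsFiniteMeasure ρ]
    (hρ : ∀ᵐ t ∂ρ, 0 ≤ t) (hz : z.im ≠ 0) :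
    z.im * ((z - (cauchyTransform ρ z)⁻¹) * conj z).im ≤ 0 := by
  set G := cauchyTransform ρ z
  set M := ∫ t, t * ‖(z - t)⁻¹‖ ^ 2 ∂ρ
  have hM : 0 ≤ M := integral_nonneg_of_ae (hρ.mono fun t ht => by positivity)
  have key : z.im * ((z - G⁻¹) * conj z).im = -(z.im ^ 2 * M) / Complex.normSq G := by
    rw [show ((z - G⁻¹) * conj z).im = (z * G).im / Complex.normSq G by
      rw [Complex.inv_def]
      simp only [Complex.mul_im, Complex.sub_im, Complex.sub_re, Complex.mul_re,
        Complex.conj_re, Complex.conj_im, Complex.ofReal_re, Complex.ofReal_im]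
      ring, im_mul_cauchyTransform hz]
    ring
  rw [key]
  exact div_nonpos_of_nonpos_of_nonneg (neg_nonpos.2 (by positivity)) (Complex.normSq_nonneg G)

end CauchyTransform

lemma ne_mul_of_im_mul_im_nonpos {z w₁ w₂ : ℂ} (hz : z.im ≠ 0)
    (h₁ : z.im * w₁.im ≤ 0) (h₂ : z.im * w₂.im ≤ 0)
    (h₁' : z.im * (w₁ * conj z).im ≤ 0) (h₂' : z.im * (w₂ * conj z).im ≤ 0) :
    z ≠ w₁ * w₂ := by
  rintro rfl
  have hw₁ : w₁ ≠ 0 := by rintro rfl; simp at hz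
  have hw₂ : w₂ ≠ 0 := by rintro rfl; simp at hz
  -- `w₁ * conj (w₁ * w₂) = |w₁|² conj w₂`, so `h₁'` is the reverse of the sign condition `h₂`.
  have e₁ : (w₁ * conj (w₁ * w₂)).im = -(Complex.normSq w₁ * w₂.im) := by
    simp only [map_mul, Complex.mul_im, Complex.mul_re, Complex.conj_re, Complex.conj_im,
      Complex.normSq_apply]
    ring
  have e₂ : (w₂ * conj (w₁ * w₂)).im = -(Complex.normSq w₂ * w₁.im) := by
    simp only [map_mul, Complex.mul_im, Complex.mul_re, Complex.conj_re, Complex.conj_im,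
      Complex.normSq_apply]
    ring
  rw [e₁] at h₁'
  rw [e₂] at h₂'
  have hi₁ : (w₁ * w₂).im * w₁.im = 0 := le_antisymm h₁ <|
    nonneg_of_mul_nonneg_right (by linarith) (Complex.normSq_pos.2 hw₂)
  have hi₂ : (w₁ * w₂).im * w₂.im = 0 := le_antisymm h₂ <|
    nonneg_of_mul_nonneg_right (by linarith) (Complex.normSq_pos.2 hw₁)
  rw [mul_eq_zero] at hi₁ hi₂
  simp [Complex.mul_im, hi₁.resolve_left hz, hi₂.resolve_left hz] at hz

theorem cauchyTransform_det_ne_zero {μ ν : Measure ℝ} [IsProbabilityMeasure μ]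
    [IsProbabilityMeasure ν] (hμ : ∀ᵐ t ∂μ, 0 ≤ t) (hν : ∀ᵐ t ∂ν, 0 ≤ t) {z : ℂ}
    (hz : z.im ≠ 0) :
    z * cauchyTransform μ z * cauchyTransform ν z
      - (z * cauchyTransform μ z - 1) * (z * cauchyTransform ν z - 1) ≠ 0 := by
  have hGμ := cauchyTransform_ne_zero (ρ := μ) hz
  have hGν := cauchyTransform_ne_zero (ρ := ν) hz
  have hfactor : z * cauchyTransform μ z * cauchyTransform ν z
      - (z * cauchyTransform μ z - 1) * (z * cauchyTransform ν z - 1)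
      = cauchyTransform μ z * cauchyTransform ν z
        * (z - (z - (cauchyTransform μ z)⁻¹) * (z - (cauchyTransform ν z)⁻¹)) := by
    field_simp
  rw [hfactor]
  exact mul_ne_zero (mul_ne_zero hGμ hGν) <| sub_ne_zero.2 <| ne_mul_of_im_mul_im_nonpos hz
    (im_mul_im_sub_inv_cauchyTransform_nonpos hz) (im_mul_im_sub_inv_cauchyTransform_nonpos hz)
    (im_mul_im_sub_inv_cauchyTransform_mul_conj_nonpos hμ hz)
    (im_mul_im_sub_inv_cauchyTransform_mul_conj_nonpos hν hz)

section Resolvent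

variable {ρ : Measure ℝ} {z : ℂ} {ψ : ℝ → ℂ}

lemma sqrt_mul_div_sub_ofReal_eq {t : ℝ} (ht : 0 ≤ t) (n b c : ℂ) :
    (√t : ℂ) * ((n + b * √t + c) / (z - t))
      = √t * n / (z - t) + b * ((t : ℂ) / (z - t)) + c * ((√t : ℂ) / (z - t)) := by
  have hsq : (√t : ℂ) * √t = t := by exact_mod_cast Real.mul_self_sqrt ht
  linear_combination (b / (z - t)) * hsq

variable (hz : z.im ≠ 0) (hψ : MemLp ψ 2 ρ) (b c : ℂ)
include hz hψ

lemma memLp_resolvent [IsFiniteMeasure ρ] :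
    MemLp (fun t : ℝ => (ψ t + b * √t + c) / (z - t)) 2 ρ := by
  convert ((hψ.div_sub_ofReal hz).add
    (((memLp_top_sqrt_div_sub_ofReal hz ρ).mono_exponent le_top).const_mul b)).add
    (((memLp_top_inv_sub_ofReal hz ρ).mono_exponent le_top).const_mul c) using 1
  funext t
  simp only [Pi.add_apply]
  ring

lemma memLp_sqrt_mul_resolvent [IsFiniteMeasure ρ] (hρ : ∀ᵐ t ∂ρ, 0 ≤ t) :
    MemLp (fun t : ℝ => (√t : ℂ) * ((ψ t + b * √t + c) / (z - t))) 2 ρ :=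
  (((hψ.sqrt_mul_div_sub_ofReal hz).add
    (((memLp_top_ofReal_div_sub_ofReal hz ρ).mono_exponent le_top).const_mul b)).add
    (((memLp_top_sqrt_div_sub_ofReal hz ρ).mono_exponent le_top).const_mul c)).ae_eq
    (hρ.mono fun _ ht => (sqrt_mul_div_sub_ofReal_eq ht _ b c).symm)

lemma integral_resolvent [IsFiniteMeasure ρ] :
    ∫ t, (ψ t + b * √t + c) / (z - t) ∂ρ
      = ∫ t, ψ t / (z - t) ∂ρ + b * sqrtCauchyTransform ρ z + c * cauchyTransform ρ z := by
  have hψi := (hψ.div_sub_ofReal hz).integrable one_le_two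
  have hWi := ((memLp_top_sqrt_div_sub_ofReal hz ρ).integrable le_top).const_mul b
  have hGi := ((memLp_top_inv_sub_ofReal hz ρ).integrable le_top).const_mul c
  simp_rw [show ∀ t : ℝ, (ψ t + b * √t + c) / (z - t)
      = ψ t / (z - t) + b * ((√t : ℂ) / (z - t)) + c * (z - t)⁻¹ from fun t => by ring]
  have hψWi : Integrable (fun t : ℝ => ψ t / (z - t) + b * ((√t : ℂ) / (z - t))) ρ :=
    hψi.add hWi
  rw [integral_add hψWi hGi, integral_add hψi hWi, integral_const_mul,
    integral_const_mul, sqrtCauchyTransform, cauchyTransform]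

lemma integral_sqrt_mul_resolvent [IsProbabilityMeasure ρ] (hρ : ∀ᵐ t ∂ρ, 0 ≤ t) :
    ∫ t, (√t : ℂ) * ((ψ t + b * √t + c) / (z - t)) ∂ρ
      = ∫ t, (√t : ℂ) * ψ t / (z - t) ∂ρ + b * (z * cauchyTransform ρ z - 1)
        + c * sqrtCauchyTransform ρ z := by
  have hψi := (hψ.sqrt_mul_div_sub_ofReal hz).integrable one_le_two
  have hHi := ((memLp_top_ofReal_div_sub_ofReal hz ρ).integrable le_top).const_mul b
  have hWi := ((memLp_top_sqrt_div_sub_ofReal hz ρ).integrable le_top).const_mul c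
  have hψHi : Integrable (fun t : ℝ => (√t : ℂ) * ψ t / (z - t) + b * ((t : ℂ) / (z - t))) ρ :=
    hψi.add hHi
  rw [integral_congr_ae (hρ.mono fun t ht => sqrt_mul_div_sub_ofReal_eq ht (ψ t) b c),
    integral_add hψHi hWi, integral_add hψi hHi, integral_const_mul,
    integral_const_mul, integral_ofReal_div_sub_ofReal hz, sqrtCauchyTransform]

end Resolvent

section Legs

variable {ρ : Measure ℝ} [IsProbabilityMeasure ρ] {z : ℂ} {ψ φ : ℝ → ℂ}

theorem resolvent_linear_numerator (hz : z.im ≠ 0) (hψ : MemLp ψ 2 ρ) (hψ0 : ∫ t, ψ t ∂ρ = 0)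
    {a e : ℂ} (hφ : φ = fun t : ℝ => (ψ t + a * t - e) / (z - t))
    (hmean : ∫ t, ψ t / (z - t) ∂ρ + a * (z * cauchyTransform ρ z - 1)
      - e * cauchyTransform ρ z = 0) :
    MemLp φ 2 ρ ∧ ∫ t, φ t ∂ρ = 0 ∧ MemLp (fun t : ℝ => (t : ℂ) * (φ t + a)) 2 ρ ∧
      ∫ t, (t : ℂ) * (φ t + a) ∂ρ = e ∧ ∀ t : ℝ, z * φ t - (t * (φ t + a) - e) = ψ t := by
  set χ : ℝ → ℂ := fun t => (ψ t + 0 * √t + (a * z - e)) / (z - t) with hχ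
  obtain rfl : φ = fun t => χ t - a := by
    rw [hφ, hχ]
    funext t
    field_simp [sub_ofReal_ne_zero hz t]
    ring
  have hχL2 : MemLp χ 2 ρ := memLp_resolvent hz hψ _ _
  have hintχ : ∫ t, χ t ∂ρ = a := by
    rw [integral_resolvent hz hψ]
    linear_combination hmean
  have hres : ∀ t : ℝ, t * χ t = z * χ t - ψ t - (a * z - e) := fun t => by
    linear_combination ofReal_mul_div_sub_ofReal hz t (ψ t + 0 * √t + (a * z - e))
  simp only [sub_add_cancel]
  refine ⟨hχL2.sub (memLp_const a), integral_sub_const_eq_zero (hχL2.integrable one_le_two) hintχ,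
    (((hχL2.const_mul z).sub hψ).sub (memLp_const _)).ae_eq (.of_forall fun t => (hres t).symm),
    ?_, fun t => by linear_combination -hres t⟩
  rw [integral_congr_ae (.of_forall hres), integral_const_mul_sub_sub_const
    (hχL2.integrable one_le_two) (hψ.integrable one_le_two), hintχ, hψ0]
  ring

theorem resolvent_sqrt_numerator (hz : z.im ≠ 0) (hψ : MemLp ψ 2 ρ) (hψ0 : ∫ t, ψ t ∂ρ = 0)
    (hρ : ∀ᵐ t ∂ρ, 0 ≤ t) {α β c₁ c₂ : ℂ}
    (hφ : φ = fun t : ℝ => (ψ t + β * t + (c₂ - c₁) * √t - (z * β - α)) / (z - t))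
    (hβ : β = α * cauchyTransform ρ z + ∫ t, ψ t / (z - t) ∂ρ
      + sqrtCauchyTransform ρ z * (c₂ - c₁)) :
    MemLp φ 2 ρ ∧ ∫ t, φ t ∂ρ = 0 ∧ MemLp (fun t : ℝ => (√t : ℂ) * (φ t + β)) 2 ρ ∧
      ∫ t, (√t : ℂ) * (φ t + β) ∂ρ = ∫ t, (√t : ℂ) * ψ t / (z - t) ∂ρ
        + (c₂ - c₁) * (z * cauchyTransform ρ z - 1) + α * sqrtCauchyTransform ρ z ∧
      MemLp (fun t : ℝ => (√t : ℂ) * ((√t : ℂ) * (φ t + β) - c₁ + c₂)) 2 ρ ∧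
      ∫ t, (√t : ℂ) * ((√t : ℂ) * (φ t + β) - c₁ + c₂) ∂ρ = z * β - α ∧
      ∀ᵐ t ∂ρ, z * φ t - ((√t : ℂ) * ((√t : ℂ) * (φ t + β) - c₁ + c₂) - (z * β - α)) = ψ t := by
  set χ : ℝ → ℂ := fun t => (ψ t + (c₂ - c₁) * √t + α) / (z - t) with hχ
  obtain rfl : φ = fun t => χ t - β := by
    rw [hφ, hχ]
    funext t
    field_simp [sub_ofReal_ne_zero hz t]
    ring
  have hχL2 : MemLp χ 2 ρ := memLp_resolvent hz hψ _ _
  have hintχ : ∫ t, χ t ∂ρ = β := by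
    rw [integral_resolvent hz hψ, hβ]
    ring
  have hres : ∀ᵐ t ∂ρ, (√t : ℂ) * ((√t : ℂ) * χ t - c₁ + c₂) = z * χ t - ψ t - α := by
    filter_upwards [hρ] with t ht
    have hsq : (√t : ℂ) * √t = t := by exact_mod_cast Real.mul_self_sqrt ht
    linear_combination χ t * hsq + ofReal_mul_div_sub_ofReal hz t (ψ t + (c₂ - c₁) * √t + α)
  simp only [sub_add_cancel]
  refine ⟨hχL2.sub (memLp_const β), integral_sub_const_eq_zero (hχL2.integrable one_le_two) hintχ,
    memLp_sqrt_mul_resolvent hz hψ _ _ hρ, integral_sqrt_mul_resolvent hz hψ _ _ hρ,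
    (((hχL2.const_mul z).sub hψ).sub (memLp_const α)).ae_eq (hres.mono fun _ h => h.symm),
    ?_, ?_⟩
  · rw [integral_congr_ae hres, integral_const_mul_sub_sub_const
      (hχL2.integrable one_le_two) (hψ.integrable one_le_two), hintχ, hψ0, sub_zero]
  · filter_upwards [hres] with t ht
    rw [ht]
    ring

end Legs

/-- The explicit bounded inverse of `z − √Q_x Q_y √Q_x` in the boolean model: the triple
`(β, φ₁, φ₂)` defined by the displayed formulas satisfies
`(z·Id − R_x ∘ Q_y ∘ R_x)(β,φ₁,φ₂) = (α,ψ₁,ψ₂)`, with all occurring integrals absolutely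
convergent and all intermediate functions lying in the respective `L²` spaces. -/
theorem boolean_model_mult_resolvent
    (μ ν : Measure ℝ) [IsProbabilityMeasure μ] [IsProbabilityMeasure ν]
    (hμ : μ (Set.Iio 0) = 0) (hν : ν (Set.Iio 0) = 0)
    (z : ℂ) (hz : z.im ≠ 0)
    (D : ℂ)
    (hD : D = z * cauchyTransform μ z * cauchyTransform ν z
      - (z * cauchyTransform μ z - 1) * (z * cauchyTransform ν z - 1))
    (α : ℂ) (ψ₁ ψ₂ : ℝ → ℂ)
    (hψ₁ : MemLp ψ₁ 2 μ) (hψ₁0 : (∫ x, ψ₁ x ∂μ) = 0)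
    (hψ₂ : MemLp ψ₂ 2 ν) (hψ₂0 : (∫ y, ψ₂ y ∂ν) = 0)
    (c₁ c₂ β c₃ : ℂ) (φ₁ φ₂ : ℝ → ℂ)
    (hc₁ : c₁ = ((z * cauchyTransform μ z - 1) * (∫ y, ψ₂ y / (z - (y : ℂ)) ∂ν)
        + cauchyTransform ν z * (α * sqrtCauchyTransform μ z
            + ∫ x, (Real.sqrt x : ℂ) * ψ₁ x / (z - (x : ℂ)) ∂μ)) / D)
    (hc₂ : c₂ = (z * cauchyTransform μ z * (∫ y, ψ₂ y / (z - (y : ℂ)) ∂ν)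
        + (z * cauchyTransform ν z - 1) * (α * sqrtCauchyTransform μ z
            + ∫ x, (Real.sqrt x : ℂ) * ψ₁ x / (z - (x : ℂ)) ∂μ)) / D)
    (hβ : β = α * cauchyTransform μ z + (∫ x, ψ₁ x / (z - (x : ℂ)) ∂μ)
        + sqrtCauchyTransform μ z * (c₂ - c₁))
    (hc₃ : c₃ = z * β - α)
    (hφ₁ : φ₁ = fun x : ℝ =>
      (ψ₁ x + β * (x : ℂ) + (c₂ - c₁) * (Real.sqrt x : ℂ) - c₃) / (z - (x : ℂ)))
    (hφ₂ : φ₂ = fun y : ℝ => (ψ₂ y + c₁ * (y : ℂ) - c₂) / (z - (y : ℂ))) :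
    D ≠ 0 ∧
    MemLp φ₁ 2 μ ∧ MemLp φ₂ 2 ν ∧
    (∫ x, φ₁ x ∂μ) = 0 ∧ (∫ y, φ₂ y ∂ν) = 0 ∧
    Integrable (fun x : ℝ => ψ₁ x / (z - (x : ℂ))) μ ∧
    Integrable (fun x : ℝ => (Real.sqrt x : ℂ) * ψ₁ x / (z - (x : ℂ))) μ ∧
    Integrable (fun y : ℝ => ψ₂ y / (z - (y : ℂ))) ν ∧
    Integrable (fun x : ℝ => (Real.sqrt x : ℂ) * (φ₁ x + β)) μ ∧
    (∫ x, (Real.sqrt x : ℂ) * (φ₁ x + β) ∂μ) = c₁ ∧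
    (let u := boolRx μ (β, φ₁, φ₂)
     let v := boolQy ν u
     let w := boolRx μ v
     MemLp u.2.1 2 μ ∧ MemLp u.2.2 2 ν ∧
     Integrable (fun y : ℝ => (y : ℂ) * (u.2.2 y + u.1)) ν ∧
     MemLp v.2.1 2 μ ∧ MemLp v.2.2 2 ν ∧
     Integrable (fun x : ℝ => (Real.sqrt x : ℂ) * (v.2.1 x + v.1)) μ ∧
     MemLp w.2.1 2 μ ∧ MemLp w.2.2 2 ν ∧
     z * β - w.1 = α ∧
     (∀ᵐ x ∂μ, z * φ₁ x - w.2.1 x = ψ₁ x) ∧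
     (∀ᵐ y ∂ν, z * φ₂ y - w.2.2 y = ψ₂ y)) := by
  have hμ₀ := ae_nonneg_of_measure_Iio_eq_zero hμ
  have hD0 : D ≠ 0 :=
    hD ▸ cauchyTransform_det_ne_zero hμ₀ (ae_nonneg_of_measure_Iio_eq_zero hν) hz
  subst hc₃
  -- Cramer's rule for `(c₁, c₂)`
  have hmean₂ : ∫ y, ψ₂ y / (z - y) ∂ν + c₁ * (z * cauchyTransform ν z - 1)
      - c₂ * cauchyTransform ν z = 0 := by
    rw [hc₁, hc₂]
    field_simp
    rw [hD]
    ring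
  obtain ⟨hφ₁L2, hφ₁0, hu₁L2, hu, hw₁L2, hw, hw₁⟩ :=
    resolvent_sqrt_numerator hz hψ₁ hψ₁0 hμ₀ hφ₁ hβ
  have hu' : ∫ x, (√x : ℂ) * (φ₁ x + β) ∂μ = c₁ := by
    rw [hu, hc₁, hc₂]
    field_simp
    rw [hD]
    ring
  obtain ⟨hφ₂L2, hφ₂0, hv₂L2, hv, hv₂⟩ := resolvent_linear_numerator hz hψ₂ hψ₂0 hφ₂ hmean₂
  simp only [boolRx, boolQy, hu', hv, hw]
  exact ⟨hD0, hφ₁L2, hφ₂L2, hφ₁0, hφ₂0, (hψ₁.div_sub_ofReal hz).integrable one_le_two,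
    (hψ₁.sqrt_mul_div_sub_ofReal hz).integrable one_le_two,
    (hψ₂.div_sub_ofReal hz).integrable one_le_two, hu₁L2.integrable one_le_two, trivial,
    hu₁L2.sub (memLp_const c₁), hφ₂L2, hv₂L2.integrable one_le_two, hu₁L2.sub (memLp_const c₁),
    hv₂L2.sub (memLp_const c₂), hw₁L2.integrable one_le_two, hw₁L2.sub (memLp_const _),
    hv₂L2.sub (memLp_const c₂), sub_sub_cancel _ _, hw₁, .of_forall hv₂⟩
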